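/- arXiv:2503.06242 — 5 statements merged into one kernel-verified Lean document; each statement's English description precedes it below -/
import Mathlib

section
/- Define the soft rank r̃_α(r)_j = Σ_{l ≠ j} F_α(r_j − r_l) for a sequence r ∈ ℝⁿ with pairwise distinct entries. Then for every j, r̃_α(r)_j → card{i : r_i < r_j} as α → 0⁺. -/
open MeasureTheory Filter Set Finset

lemma F_tendsto_atTop {f : ℝ → ℝ} (hf_int : Integrable f) (hf_norm : ∫ x, f x = 1) :
    Tendsto (fun x : ℝ => ∫ t in Iic x, f t) atTop (nhds 1) := by
  have := (aecover_Iic (μ := (volume : Measure ℝ)) (l := atTop)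
    (b := fun x : ℝ => x) tendsto_id).integral_tendsto_of_countably_generated hf_int
  rwa [hf_norm] at this

lemma F_tendsto_atBot {f : ℝ → ℝ} (hf_int : Integrable f) (hf_norm : ∫ x, f x = 1) :
    Tendsto (fun x : ℝ => ∫ t in Iic x, f t) atBot (nhds 0) := by
  have h : Tendsto (fun x : ℝ => ∫ t in Ioi x, f t) atBot (nhds 1) := by
    have := (aecover_Ioi (μ := (volume : Measure ℝ)) (l := atBot)
      (a := fun x : ℝ => x) tendsto_id).integral_tendsto_of_countably_generated hf_int
    rwa [hf_norm] at this
  have heq : ∀ x : ℝ, ∫ t in Iic x, f t = 1 - ∫ t in Ioi x, f t := by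
    intro x
    have := intervalIntegral.integral_Iic_add_Ioi (μ := volume) (b := x) hf_int.integrableOn hf_int.integrableOn
    rw [hf_norm] at this
    linarith
  simp only [heq]
  have := (tendsto_const_nhds (x := (1:ℝ)) (f := atBot)).sub h
  simpa using this

/-- The soft rank `r̃_α(r)_j = ∑_{l ≠ j} F ((r j - r l)/α)` converges,
as `α → 0⁺`, to the hard rank `card {i : r i < r j}`, for a sequence with pairwise
distinct entries. -/
theorem soft_rank_tendsto_hard_rank {n : ℕ} (f F : ℝ → ℝ)
    (hf_cont : Continuous f) (hf_pos : ∀ x, 0 < f x) (hf_even : ∀ x, f (-x) = f x)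
    (hf_int : Integrable f) (hf_norm : ∫ x, f x = 1)
    (hF : ∀ x, F x = ∫ t in Iic x, f t)
    (r : Fin n → ℝ) (hr : Function.Injective r) (j : Fin n) :
    Tendsto (fun α : ℝ => ∑ l ∈ Finset.univ.erase j, F ((r j - r l) / α))
      (nhdsWithin 0 (Ioi 0))
      (nhds ((Finset.univ.filter (fun i => r i < r j)).card : ℝ)) := by
  have hFtop : Tendsto F atTop (nhds 1) := by
    have := F_tendsto_atTop hf_int hf_norm
    exact this.congr fun x => (hF x).symm
  have hFbot : Tendsto F atBot (nhds 0) := by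
    have := F_tendsto_atBot hf_int hf_norm
    exact this.congr fun x => (hF x).symm
  have hterm : ∀ l ∈ Finset.univ.erase j,
      Tendsto (fun α : ℝ => F ((r j - r l) / α)) (nhdsWithin 0 (Ioi 0))
        (nhds (if r l < r j then (1:ℝ) else 0)) := by
    intro l hl
    have hne : r l ≠ r j := fun h => (Finset.mem_erase.mp hl).1 (hr h)
    rcases lt_or_gt_of_ne hne with hlt | hgt
    · rw [if_pos hlt]
      have harg : Tendsto (fun α : ℝ => (r j - r l) / α) (nhdsWithin 0 (Ioi 0)) atTop := by
        have h1 : Tendsto (fun α : ℝ => α⁻¹) (nhdsWithin 0 (Ioi 0)) atTop :=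
          tendsto_inv_nhdsGT_zero
        have := h1.const_mul_atTop (sub_pos.mpr hlt)
        simpa [div_eq_mul_inv] using this
      exact hFtop.comp harg
    · rw [if_neg (not_lt.mpr hgt.le)]
      have harg : Tendsto (fun α : ℝ => (r j - r l) / α) (nhdsWithin 0 (Ioi 0)) atBot := by
        have h1 : Tendsto (fun α : ℝ => α⁻¹) (nhdsWithin 0 (Ioi 0)) atTop :=
          tendsto_inv_nhdsGT_zero
        have := h1.const_mul_atTop_of_neg (by linarith : r j - r l < 0)
        simpa [div_eq_mul_inv] using this
      exact hFbot.comp harg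
  have hsum := tendsto_finset_sum (Finset.univ.erase j) hterm
  convert hsum using 2
  rw [Finset.sum_ite, Finset.sum_const_zero, add_zero, Finset.sum_const, nsmul_eq_mul, mul_one]
  congr 1
  rw [Finset.filter_erase, Finset.erase_eq_of_notMem (by simp)]
end

section
/- Let r ∈ ℝⁿ be strictly increasing, k ∈ {1,…,n−1} an integer, and b_α = b_α(r,k) the solution of Σᵢ F_α(b_α − rᵢ) = k. Then as α → 0⁺, F_α(b_α − r_j) → 1 for j < k and F_α(b_α − r_j) → 0 for j ≥ k. -/
open MeasureTheory Filter Set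

open Topology in
/-- Let `r` be strictly increasing, `k ∈ {1,…,n-1}` an integer, and
`b α` the solution of `∑ i, F ((b α - r i)/α) = k`. Then as `α → 0⁺`,
`F ((b α - r j)/α) → 1` for `j < k` and `→ 0` for `j ≥ k`. -/
theorem soft_topk_limit_hard {n : ℕ} (f F : ℝ → ℝ)
    (hf_cont : Continuous f) (hf_pos : ∀ x, 0 < f x) (hf_even : ∀ x, f (-x) = f x)
    (hf_int : Integrable f) (hf_norm : ∫ x, f x = 1)
    (hF : ∀ x, F x = ∫ t in Iic x, f t)
    (r : Fin n → ℝ) (hr : StrictMono r)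
    (k : ℕ) (hk1 : 1 ≤ k) (hkn : k ≤ n - 1)
    (b : ℝ → ℝ) (hb : ∀ α : ℝ, 0 < α → ∑ i, F ((b α - r i) / α) = (k : ℝ)) :
    ∀ j : Fin n,
      ((j : ℕ) < k →
        Tendsto (fun α : ℝ => F ((b α - r j) / α)) (nhdsWithin 0 (Ioi 0)) (nhds 1)) ∧
      (k ≤ (j : ℕ) →
        Tendsto (fun α : ℝ => F ((b α - r j) / α)) (nhdsWithin 0 (Ioi 0)) (nhds 0)) := by
  have hn2 : 2 ≤ n := by omega
  have hkn' : k < n := by omega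
  -- basic facts about F
  have hf0 : 0 ≤ᵐ[(volume : Measure ℝ)] f := .of_forall fun x => (hf_pos x).le
  have hF0 : ∀ x, 0 ≤ F x := fun x => by
    rw [hF]; exact setIntegral_nonneg measurableSet_Iic fun t _ => (hf_pos t).le
  have hF1 : ∀ x, F x ≤ 1 := fun x => by
    rw [hF, ← hf_norm]; exact setIntegral_le_integral hf_int hf0
  have hFmono : Monotone F := fun x y hxy => by
    rw [hF, hF]
    exact setIntegral_mono_set hf_int.integrableOn (ae_restrict_of_ae hf0)
      (HasSubset.Subset.eventuallyLE (Iic_subset_Iic.2 hxy))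
  have hFtop : Tendsto F atTop (𝓝 1) := by
    have h := tendsto_setIntegral_of_monotone (μ := volume) (f := f)
      (s := fun x : ℝ => Iic x) (fun _ => measurableSet_Iic)
      (fun x y h => Iic_subset_Iic.2 h) (by rw [iUnion_Iic]; exact hf_int.integrableOn)
    rw [iUnion_Iic, setIntegral_univ, hf_norm] at h
    exact h.congr fun x => (hF x).symm
  have hFbot : Tendsto F atBot (𝓝 0) := by
    have h := tendsto_setIntegral_of_antitone (μ := volume) (f := f)
      (s := fun x : ℝ => Iic (-x)) (fun _ => measurableSet_Iic)
      (fun x y hxy => Iic_subset_Iic.2 (by linarith)) ⟨0, hf_int.integrableOn⟩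
    have hempty : (⋂ x : ℝ, Iic (-x)) = (∅ : Set ℝ) := by
      ext y; simp only [mem_iInter, mem_Iic, mem_empty_iff_false, iff_false, not_forall]
      exact ⟨-(y - 1), by push_neg; linarith⟩
    rw [hempty, setIntegral_empty] at h
    have h2 : Tendsto (fun x : ℝ => F (-x)) atTop (𝓝 0) := h.congr fun x => (hF (-x)).symm
    exact (h2.comp tendsto_neg_atBot_atTop).congr fun x => by simp
  -- the gap
  set jk : Fin n := ⟨k, hkn'⟩ with hjk
  set jk1 : Fin n := ⟨k - 1, by omega⟩ with hjk1
  set δ : ℝ := r jk - r jk1 with hδdef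
  have hδ : 0 < δ := sub_pos.2 (hr (by simp [hjk, hjk1, Fin.lt_def]; omega))
  have hk0 : (0:ℝ) < (k:ℝ) := by exact_mod_cast hk1
  -- cardinality of the small-index set
  have hcard : (Finset.univ.filter fun i : Fin n => (i:ℕ) < k).card = k := by
    have he : (Finset.univ.filter fun i : Fin n => (i:ℕ) < k)
        = Finset.map (Fin.castLEEmb hkn'.le) Finset.univ := by
      ext i; simp [Fin.castLEEmb]
      constructor
      · intro hi; exact ⟨⟨i, hi⟩, rfl⟩
      · rintro ⟨a, rfl⟩; exact a.2
    rw [he]; simp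
  -- key claim: for j ≥ k, the value tends to 0
  have hzero : ∀ j : Fin n, k ≤ (j:ℕ) →
      Tendsto (fun α : ℝ => F ((b α - r j) / α)) (𝓝[>] (0:ℝ)) (𝓝 0) := by
    intro j hj
    rw [tendsto_order]
    constructor
    · intro a ha
      exact Eventually.of_forall fun α => ha.trans_le (hF0 _)
    · intro a ha
      obtain ⟨c, hc⟩ : ∃ c, F c < a := (hFbot.eventually (gt_mem_nhds ha)).exists
      have hδα : Tendsto (fun α : ℝ => c + δ / α) (𝓝[>] (0:ℝ)) atTop := by
        refine tendsto_atTop_add_const_left _ c ?_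
        have := Tendsto.const_mul_atTop hδ tendsto_inv_nhdsGT_zero
        exact this.congr fun x => (div_eq_mul_inv δ x).symm
      have hev : ∀ᶠ α in 𝓝[>] (0:ℝ), 1 - a / k < F (c + δ / α) :=
        (hFtop.comp hδα).eventually (lt_mem_nhds (by
          have : 0 < a / k := div_pos ha hk0
          linarith))
      filter_upwards [hev, self_mem_nhdsWithin] with α h1 hα
      rw [mem_Ioi] at hα
      by_contra hcon
      push_neg at hcon
      -- a ≤ F ((b α - r j)/α)
      have hcx : c < (b α - r j) / α := by
        by_contra h
        push_neg at h
        exact absurd (hcon.trans (hFmono h)) (not_le.2 hc)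
      have hlow : ∀ i : Fin n, (i:ℕ) < k → F (c + δ / α) ≤ F ((b α - r i) / α) := by
        intro i hi
        apply hFmono
        have hri : r i ≤ r jk1 := hr.monotone (by simp [hjk1, Fin.le_def]; omega)
        have hrj : r jk ≤ r j := hr.monotone (by simp [hjk, Fin.le_def]; exact hj)
        have heq : (b α - r i) / α = (b α - r j) / α + (r j - r i) / α := by
          field_simp
          ring
        rw [heq]
        have hge : δ ≤ r j - r i := by rw [hδdef]; linarith
        have : δ / α ≤ (r j - r i) / α := (div_le_div_iff_of_pos_right hα).2 hge
        linarith
      -- sum bound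
      have hsum := hb α hα
      have hsplit := Finset.sum_filter_add_sum_filter_not Finset.univ
        (fun i : Fin n => (i:ℕ) < k) (fun i => F ((b α - r i) / α))
      have hA : (k:ℝ) * F (c + δ / α)
          ≤ ∑ i ∈ Finset.univ.filter (fun i : Fin n => (i:ℕ) < k), F ((b α - r i) / α) := by
        calc (k:ℝ) * F (c + δ / α)
            = ∑ _i ∈ Finset.univ.filter (fun i : Fin n => (i:ℕ) < k), F (c + δ / α) := by
              rw [Finset.sum_const, hcard, nsmul_eq_mul]
          _ ≤ _ := Finset.sum_le_sum fun i hi => hlow i (Finset.mem_filter.1 hi).2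
      have hB : a ≤ ∑ i ∈ Finset.univ.filter (fun i : Fin n => ¬ (i:ℕ) < k),
          F ((b α - r i) / α) := by
        refine hcon.trans (Finset.single_le_sum
          (f := fun i : Fin n => F ((b α - r i) / α)) (fun i _ => hF0 _) ?_)
        simp [not_lt, hj]
      have hle : (k:ℝ) * F (c + δ / α) + a ≤ (k:ℝ) := by
        linarith [hsplit.trans hsum]
      have hgt := mul_lt_mul_of_pos_left h1 hk0
      rw [mul_sub, mul_one, mul_div_cancel₀ _ (ne_of_gt hk0)] at hgt
      linarith
  intro j
  refine ⟨fun hj => ?_, hzero j⟩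
  -- sum of the large-index values tends to 0
  have hS : Tendsto (fun α : ℝ => ∑ i ∈ Finset.univ.filter (fun i : Fin n => ¬ (i:ℕ) < k),
      F ((b α - r i) / α)) (𝓝[>] (0:ℝ)) (𝓝 0) := by
    have h := tendsto_finset_sum (Finset.univ.filter (fun i : Fin n => ¬ (i:ℕ) < k))
      (fun i hi => hzero i (by simpa [not_lt] using (Finset.mem_filter.1 hi).2))
    simpa using h
  have hSlim : Tendsto (fun α : ℝ => 1 - (∑ i ∈ Finset.univ.filter
      (fun i : Fin n => ¬ (i:ℕ) < k), F ((b α - r i) / α))) (𝓝[>] (0:ℝ)) (𝓝 1) := by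
    simpa using tendsto_const_nhds.sub hS
  refine tendsto_of_tendsto_of_tendsto_of_le_of_le' hSlim tendsto_const_nhds ?_ ?_
  · filter_upwards [self_mem_nhdsWithin] with α hα
    rw [mem_Ioi] at hα
    have hsum := hb α hα
    have hsplit := Finset.sum_filter_add_sum_filter_not Finset.univ
      (fun i : Fin n => (i:ℕ) < k) (fun i => F ((b α - r i) / α))
    have hjmem : j ∈ Finset.univ.filter (fun i : Fin n => (i:ℕ) < k) := by simp [hj]
    have hsplit2 := Finset.add_sum_erase _ (fun i => F ((b α - r i) / α)) hjmem
    have hcarde : ((Finset.univ.filter (fun i : Fin n => (i:ℕ) < k)).erase j).card = k - 1 := by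
      rw [Finset.card_erase_of_mem hjmem, hcard]
    have hbound : ∑ i ∈ (Finset.univ.filter (fun i : Fin n => (i:ℕ) < k)).erase j,
        F ((b α - r i) / α) ≤ ((k:ℝ) - 1) := by
      have := Finset.sum_le_card_nsmul ((Finset.univ.filter
        (fun i : Fin n => (i:ℕ) < k)).erase j) (fun i => F ((b α - r i) / α)) 1
        (fun i _ => hF1 _)
      rw [hcarde, nsmul_eq_mul, mul_one] at this
      calc _ ≤ ((k - 1 : ℕ) : ℝ) := this
        _ = (k:ℝ) - 1 := by push_cast [hk1]; ring
    linarith [hsplit.trans hsum, hsplit2, hbound]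
  · exact Eventually.of_forall fun α => hF1 _
end

section
/- Consequently, the soft top-k map restricted to the hyperplane {r ∈ ℝⁿ : Σᵢ rᵢ = 0} is injective. -/
/-! Strict monotonicity of `F` makes equal outputs force equal arguments, so `r'` is the shift
`r + (b' - b)` of `r`; a nonzero constant shift changes the coordinate sum, so on the hyperplane
`∑ i, r i = 0` the shift vanishes. -/

open Finset Function

theorem eq_of_eq_add_const_of_sum_eq {ι M : Type*} [Fintype ι] [AddCancelCommMonoid M]
    [IsAddTorsionFree M] {r r' : ι → M} {c : M} (hshift : ∀ i, r' i = r i + c)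
    (hsum : ∑ i, r i = ∑ i, r' i) : r = r' := by
  funext i
  have : Nonempty ι := ⟨i⟩
  have hcard : Fintype.card ι • c = Fintype.card ι • 0 := by
    simp only [hshift, sum_add_distrib, sum_const, card_univ] at hsum
    simpa using hsum.symm
  rw [hshift, nsmul_right_injective Fintype.card_ne_zero hcard, add_zero]

theorem eq_add_sub_of_apply_sub_div_eq {ι K β : Type*} [Field K] {F : K → β}
    (hF : Injective F) {α : K} (hα : α ≠ 0) {r r' : ι → K} {b b' : K}
    (heq : ∀ i, F ((b - r i) / α) = F ((b' - r' i) / α)) (i : ι) :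
    r' i = r i + (b' - b) := by
  have h := (div_left_inj' hα).mp (hF (heq i))
  linear_combination h

theorem soft_topk_injective_on_zero_sum_general {n : ℕ} (F : ℝ → ℝ)
    (hF_mono : StrictMono F)
    (α : ℝ) (hα : 0 < α)
    (r r' : Fin n → ℝ) (hr : ∑ i, r i = 0) (hr' : ∑ i, r' i = 0)
    (b b' : ℝ)
    (heq : ∀ i, F ((b - r i) / α) = F ((b' - r' i) / α)) :
    r = r' :=
  eq_of_eq_add_const_of_sum_eq (eq_add_sub_of_apply_sub_div_eq hF_mono.injective hα.ne' heq)
    (hr.trans hr'.symm)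

/-- The soft top-k map restricted to the hyperplane
`{r : ∑ i, r i = 0}` is injective: if two zero-sum inputs produce the same soft
top-k output, they are equal. -/
theorem soft_topk_injective_on_zero_sum {n : ℕ} (hn : 0 < n) (F : ℝ → ℝ)
    (hF_mono : StrictMono F) (hF_cont : Continuous F)
    (α : ℝ) (hα : 0 < α) (k : ℝ) (hk0 : 0 < k) (hkn : k < n)
    (r r' : Fin n → ℝ) (hr : ∑ i, r i = 0) (hr' : ∑ i, r' i = 0)
    (b b' : ℝ)
    (hb : ∑ i, F ((b - r i) / α) = k)
    (hb' : ∑ i, F ((b' - r' i) / α) = k)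
    (heq : ∀ i, F ((b - r i) / α) = F ((b' - r' i) / α)) :
    r = r' :=
  soft_topk_injective_on_zero_sum_general F hF_mono α hα r r' hr hr' b b' heq
end

section
/- With the notation of the piecewise representation (α = 1): if k ∈ (0,n) and the solution b of Σᵢ Lap(b − rᵢ) = k lies in [r_j, r_{j+1}] for some 0 ≤ j < n−1, then b = r_{j+1} − log a_j + log( k − c_{j+1} + √((k − c_{j+1})² + a_j b_{j+1} e^{r_j − r_{j+1}}) ). -/
/-- The CDF of the standard Laplace distribution. -/
noncomputable def Lap (x : ℝ) : ℝ :=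
  if x ≤ 0 then Real.exp x / 2 else 1 - Real.exp (-x) / 2

/-- closed-form inverse of the Laplace CDF sum (with `α = 1`). If on
`[r j, r (j+1)]` the sum has the representation
`∑ i, Lap (x - r i) = (1/2) aj e^{x - r (j+1)} - (1/2) bj e^{r j - x} + (j+1)`
with `aj, bj > 0`, `k ∈ (0, n)` and the solution `b` of `∑ i, Lap (b - r i) = k`
lies in `[r j, r (j+1)]`, then
`b = r (j+1) - log aj + log (k - (j+1) + √((k - (j+1))² + aj * bj * e^{r j - r (j+1)}))`. -/
theorem lapsum_inverse_closed_form {n : ℕ}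
    (r : ℕ → ℝ) (hr : ∀ i j, i < j → j < n → r i < r j)
    (j : ℕ) (hj : j + 1 < n)
    (aj bj : ℝ) (haj : 0 < aj) (hbj : 0 < bj)
    (hrep : ∀ x, r j ≤ x → x ≤ r (j + 1) →
      ∑ i ∈ Finset.range n, Lap (x - r i) =
        (1 / 2) * aj * Real.exp (x - r (j + 1))
          - (1 / 2) * bj * Real.exp (r j - x) + ((j : ℝ) + 1))
    (k : ℝ) (hk0 : 0 < k) (hkn : k < n)
    (b : ℝ) (hb : ∑ i ∈ Finset.range n, Lap (b - r i) = k)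
    (hbmem : r j ≤ b ∧ b ≤ r (j + 1)) :
    b = r (j + 1) - Real.log aj +
        Real.log (k - ((j : ℝ) + 1) +
          Real.sqrt ((k - ((j : ℝ) + 1)) ^ 2 + aj * bj * Real.exp (r j - r (j + 1)))) := by
  obtain ⟨hb1, hb2⟩ := hbmem
  have hrepb := hrep b hb1 hb2
  rw [hb] at hrepb
  set K := k - ((j : ℝ) + 1) with hK
  set u := Real.exp (b - r (j + 1)) with hu
  have hu0 : 0 < u := Real.exp_pos _
  set E := Real.exp (r j - r (j + 1)) with hE
  have hE0 : 0 < E := Real.exp_pos _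
  have he : Real.exp (r j - b) = E / u := by
    rw [hE, hu, ← Real.exp_sub]; ring_nf
  have heq : (1 / 2) * aj * u - (1 / 2) * bj * (E / u) = K := by
    rw [← he]; rw [hK]; linarith [hrepb]
  have key : aj * u ^ 2 = 2 * K * u + bj * E := by
    field_simp at heq; nlinarith [heq]
  have hsq : (aj * u - K) ^ 2 = K ^ 2 + aj * bj * E := by nlinarith
  have hpos : 0 < aj * u - K := by
    have h1 : K = (aj * u - bj * E / u) / 2 := by rw [← heq]; ring
    have h2 : 0 < bj * E / u := by positivity
    nlinarith
  have hsqrt : Real.sqrt (K ^ 2 + aj * bj * E) = aj * u - K := by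
    rw [← hsq, Real.sqrt_sq hpos.le]
  rw [hsqrt]
  have h3 : K + (aj * u - K) = aj * u := by ring
  rw [h3, Real.log_mul haj.ne' hu0.ne', hu, Real.log_exp]
  ring
end

section
/- For a sequence r with pairwise distinct entries, the soft sort (Sort_α(r))_l = b_α(r, l + 1/2), l = 0,…,n−1, converges as α → 0⁺ to the increasingly sorted rearrangement of r. -/
/-!
Write `G_α(x) = ∑ i, F ((x - r i) / α)`, which is monotone in `x`, so that `b_α(w)` is squeezed
by any `x` at which `G_α(x) - w` has a definite sign. As `α → 0⁺`, each `F ((x - r i) / α)` tends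
to `1` if `r i < x` and to `0` if `r i > x`; hence for any `x` above the `l`-th order statistic
`G_α(x)` eventually exceeds `l + 1/2` (at least `l + 1` terms tend to `1`), and for any `x`
below it `G_α(x)` eventually stays below `l + 1/2` (at most `l` terms do not tend to `0`).
-/

open MeasureTheory Filter Set Topology Finset

lemma monotone_setIntegral_Iic {μ : Measure ℝ} {f : ℝ → ℝ} (hf : 0 ≤ f) (hfi : Integrable f μ) :
    Monotone fun x => ∫ t in Iic x, f t ∂μ :=
  fun _ _ hxy => setIntegral_mono_set hfi.integrableOn (ae_of_all _ hf)
    (Set.Iic_subset_Iic.2 hxy).eventuallyLE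

lemma tendsto_setIntegral_Iic_atTop {E : Type*} [NormedAddCommGroup E] [NormedSpace ℝ E]
    {μ : Measure ℝ} {f : ℝ → E} (hfi : Integrable f μ) :
    Tendsto (fun x => ∫ t in Iic x, f t ∂μ) atTop (𝓝 (∫ t, f t ∂μ)) :=
  (aecover_Iic tendsto_id).integral_tendsto_of_countably_generated hfi

section ScaledLimits

variable {β : Type*} [TopologicalSpace β] {F : ℝ → β} {a : β} {c : ℝ}

lemma tendsto_comp_div_nhdsGT_zero_of_pos (hF : Tendsto F atTop (𝓝 a)) (hc : 0 < c) :
    Tendsto (fun α => F (c / α)) (𝓝[>] 0) (𝓝 a) :=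
  hF.comp <| (tendsto_inv_nhdsGT_zero.const_mul_atTop hc).congr fun _ => (div_eq_mul_inv _ _).symm

lemma tendsto_comp_div_nhdsGT_zero_of_neg (hF : Tendsto F atBot (𝓝 a)) (hc : c < 0) :
    Tendsto (fun α => F (c / α)) (𝓝[>] 0) (𝓝 a) :=
  hF.comp <| (tendsto_inv_nhdsGT_zero.const_mul_atTop_of_neg hc).congr
    fun _ => (div_eq_mul_inv _ _).symm

end ScaledLimits

section SoftSort

variable {ι : Type*} [Fintype ι] {F : ℝ → ℝ} {q : ι → ℝ} {S : Finset ι} {x w : ℝ}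

lemma eventually_lt_sum_comp_div (hF_mono : Monotone F) (hF_bot : Tendsto F atBot (𝓝 0))
    (hF_top : Tendsto F atTop (𝓝 1)) (hS : ∀ i ∈ S, q i < x) (hw : w < #S) :
    ∀ᶠ α in 𝓝[>] 0, w < ∑ i, F ((x - q i) / α) := by
  have hS_lim : Tendsto (fun α => ∑ i ∈ S, F ((x - q i) / α)) (𝓝[>] 0) (𝓝 (#S : ℝ)) := by
    simpa using tendsto_finsetSum S fun i hi =>
      tendsto_comp_div_nhdsGT_zero_of_pos hF_top (sub_pos.2 (hS i hi))
  filter_upwards [hS_lim.eventually_const_lt hw] with α hα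
  exact hα.trans_le (sum_le_univ_sum_of_nonneg fun _ => hF_mono.le_of_tendsto hF_bot _)

lemma eventually_sum_comp_div_lt [DecidableEq ι] (hF_mono : Monotone F)
    (hF_bot : Tendsto F atBot (𝓝 0)) (hF_top : Tendsto F atTop (𝓝 1)) (hS : ∀ i ∉ S, x < q i)
    (hw : #S < w) :
    ∀ᶠ α in 𝓝[>] 0, ∑ i, F ((x - q i) / α) < w := by
  have hSc_lim :
      Tendsto (fun α => #S + ∑ i ∈ Sᶜ, F ((x - q i) / α)) (𝓝[>] 0) (𝓝 (#S : ℝ)) := by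
    simpa using tendsto_const_nhds.add <| tendsto_finsetSum Sᶜ fun i hi =>
      tendsto_comp_div_nhdsGT_zero_of_neg hF_bot (sub_neg.2 (hS i (mem_compl.1 hi)))
  filter_upwards [hSc_lim.eventually_lt_const hw] with α hα
  refine lt_of_le_of_lt ?_ hα
  rw [← sum_add_sum_compl S]
  gcongr
  calc ∑ i ∈ S, F ((x - q i) / α)
      ≤ ∑ _i ∈ S, (1 : ℝ) := sum_le_sum fun _ _ => hF_mono.ge_of_tendsto hF_top _
    _ = #S := by simp

theorem tendsto_of_sum_comp_div_eq_add_half (hF_mono : Monotone F)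
    (hF_bot : Tendsto F atBot (𝓝 0)) (hF_top : Tendsto F atTop (𝓝 1)) {n : ℕ} {q : Fin n → ℝ}
    (hq : Monotone q) (l : Fin n) {b : ℝ → ℝ}
    (hb : ∀ᶠ α in 𝓝[>] 0, ∑ i, F ((b α - q i) / α) = (l : ℕ) + 1 / 2) :
    Tendsto b (𝓝[>] 0) (𝓝 (q l)) := by
  have hsum_mono : ∀ α > (0 : ℝ), Monotone fun x => ∑ i, F ((x - q i) / α) :=
    fun α hα _ _ hxy => sum_le_sum fun _ _ => hF_mono (by gcongr)
  refine tendsto_order.2 ⟨fun y hy => ?_, fun y hy => ?_⟩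
  · have hbelow := eventually_sum_comp_div_lt hF_mono hF_bot hF_top (S := Iio l) (x := y)
      (w := (l : ℕ) + 1 / 2) (fun k hk => hy.trans_le (hq (not_lt.1 (by simpa using hk))))
      (by simp)
    filter_upwards [hbelow, hb, self_mem_nhdsWithin] with α hlt heq hα
    exact (hsum_mono α hα).reflect_lt (heq ▸ hlt)
  · have habove := eventually_lt_sum_comp_div hF_mono hF_bot hF_top (S := Iic l) (x := y)
      (w := (l : ℕ) + 1 / 2) (fun k hk => (hq (by simpa using hk)).trans_lt hy) (by norm_num)
    filter_upwards [habove, hb, self_mem_nhdsWithin] with α hlt heq hα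
    exact (hsum_mono α hα).reflect_lt (heq ▸ hlt)

end SoftSort

theorem soft_sort_tendsto_sorted_general {n : ℕ} (f F : ℝ → ℝ)
    (hf_pos : ∀ x, 0 < f x)
    (hf_int : Integrable f) (hf_norm : ∫ x, f x = 1)
    (hF : ∀ x, F x = ∫ t in Iic x, f t)
    (r : Fin n → ℝ)
    (b : ℝ → ℝ → ℝ)
    (hb : ∀ α : ℝ, 0 < α → ∀ w : ℝ, 0 < w → w < n →
      ∑ i, F ((b α w - r i) / α) = w)
    (σ : Equiv.Perm (Fin n)) (hσ : StrictMono (r ∘ σ)) :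
    ∀ l : Fin n,
      Tendsto (fun α : ℝ => b α ((l : ℕ) + 1 / 2)) (nhdsWithin 0 (Ioi 0))
        (nhds (r (σ l))) := by
  intro l
  have hF_eq : (fun x => ∫ t in Iic x, f t) = F := funext fun x => (hF x).symm
  have hF_mono : Monotone F := hF_eq ▸ monotone_setIntegral_Iic (fun x => (hf_pos x).le) hf_int
  have hF_bot : Tendsto F atBot (𝓝 0) := hF_eq ▸ tendsto_integral_Iic_zero tendsto_id
  have hF_top : Tendsto F atTop (𝓝 1) := hF_eq ▸ hf_norm ▸ tendsto_setIntegral_Iic_atTop hf_int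
  refine tendsto_of_sum_comp_div_eq_add_half hF_mono hF_bot hF_top hσ.monotone l ?_
  have hl : ((l : ℕ) : ℝ) + 1 ≤ n := by exact_mod_cast l.isLt
  filter_upwards [self_mem_nhdsWithin] with α hα
  rw [Function.comp_def, Equiv.sum_comp σ fun i => F ((b α _ - r i) / α)]
  exact hb α hα _ (by positivity) (by linarith)

/-- For a sequence `r` with pairwise distinct entries, the soft sort
`(Sort_α r)_l = b α (l + 1/2)`, where `b α w` solves `∑ i, F ((b - r i)/α) = w`,
converges as `α → 0⁺` to the increasingly sorted rearrangement of `r`: if `σ` is the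
permutation sorting `r` increasingly, then `b α (l + 1/2) → r (σ l)`. -/
theorem soft_sort_tendsto_sorted {n : ℕ} (f F : ℝ → ℝ)
    (hf_cont : Continuous f) (hf_pos : ∀ x, 0 < f x) (hf_even : ∀ x, f (-x) = f x)
    (hf_int : Integrable f) (hf_norm : ∫ x, f x = 1)
    (hF : ∀ x, F x = ∫ t in Iic x, f t)
    (r : Fin n → ℝ) (hr : Function.Injective r)
    (b : ℝ → ℝ → ℝ)
    (hb : ∀ α : ℝ, 0 < α → ∀ w : ℝ, 0 < w → w < n →
      ∑ i, F ((b α w - r i) / α) = w)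
    (σ : Equiv.Perm (Fin n)) (hσ : StrictMono (r ∘ σ)) :
    ∀ l : Fin n,
      Tendsto (fun α : ℝ => b α ((l : ℕ) + 1 / 2)) (nhdsWithin 0 (Ioi 0))
        (nhds (r (σ l))) :=
  soft_sort_tendsto_sorted_general f F hf_pos hf_int hf_norm hF r b hb σ hσ
end
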